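/- Let A be a commutative C*-algebra with unit e and let M be a full Hilbert A-module. Then every derivation on End_A(M) is an inner derivation: for every derivation d on End_A(M) there exists T ∈ End_A(M) such that d(S) = TS − ST for all S ∈ End_A(M). -/

import Mathlib

/-!
Fullness and the unit of `A` give `x i, y i` with `∑ i, ⟪x i, y i⟫ = 1`. With
`θ_{y, x} z = ⟪y, z⟫ • x`, the Leibniz rule applied to `S * θ_{y, x} = θ_{y, S x}` gives
`d S = T * S - S * T` for `T z = ∑ i, d (θ_{x i, z}) (y i)`. The centre of `End_A(M)` consists of
the multiplication operators and `d` preserves it, so `d` induces a derivation of the commutative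
C⋆-algebra `A`; such derivations vanish, hence `T` is `A`-linear. Finally `T` is bounded by the
closed graph theorem, as `⟪w, T z⟫ • y i = ⟪w, z⟫ • T (y i) - d (θ_{w, y i}) z` is continuous
in `z`.
-/

set_option synthInstance.maxHeartbeats 1000000
set_option maxHeartbeats 1000000

/-- `End_A(M)`: the algebra of all bounded `A`-linear operators on `M`, realized as a
subalgebra of the bounded `ℂ`-linear operators on `M`. -/
def EndA (A : Type*) (M : Type*) [CStarAlgebra A] [NormedAddCommGroup M] [NormedSpace ℂ M]
    [Module A M] [IsScalarTower ℂ A M] : Subalgebra ℂ (M →L[ℂ] M) where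
  carrier := {T | ∀ (a : A) (x : M), T (a • x) = a • T x}
  add_mem' := by
    intro S T hS hT a x
    simp [hS a x, hT a x]
  mul_mem' := by
    intro S T hS hT a x
    simp only [ContinuousLinearMap.mul_apply, hT a x, hS a (T x)]
  one_mem' := by intro a x; simp
  zero_mem' := by intro a x; simp
  algebraMap_mem' := by
    intro c a x
    simp only [Algebra.algebraMap_eq_smul_one, ContinuousLinearMap.smul_apply,
      ContinuousLinearMap.one_apply]
    exact smul_comm c a x

open scoped InnerProductSpace

section CStarModule

variable {A E : Type*} [CStarAlgebra A] [PartialOrder A] [NormedAddCommGroup E]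
  [NormedSpace ℂ E] [SMul A E] [CStarModule A E]

theorem sum_inner_smul_eq_self {ι : Type*} [Fintype ι] {x y : ι → E}
    (hxy : ∑ i, ⟪x i, y i⟫_A = 1) (a : A) : ∑ i, ⟪x i, a • y i⟫_A = a := by
  simp_rw [CStarModule.inner_op_smul_right, ← Finset.mul_sum, hxy, mul_one]

/-- The inner products span an ideal of `A`, and a dense ideal of a unital Banach algebra
contains `1`. -/
theorem exists_sum_inner_eq_one
    (full : (Submodule.span ℂ {a : A | ∃ x y : E, ⟪x, y⟫_A = a}).topologicalClosure = ⊤) :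
    ∃ (n : ℕ) (x y : Fin n → E), ∑ i, ⟪x i, y i⟫_A = 1 := by
  set s := {a : A | ∃ x y : E, ⟪x, y⟫_A = a}
  have hspan : Ideal.span s = ⊤ := by
    by_contra hne
    refine Ideal.closure_ne_top _ hne (eq_top_iff.mpr fun a _ => ?_)
    have ha : a ∈ closure (Submodule.span ℂ s : Set A) := by
      rw [← Submodule.topologicalClosure_coe, full]; trivial
    exact closure_mono (Submodule.span_subset_span ℂ A s) ha
  obtain ⟨n, f, g, hsum⟩ :=
    Submodule.mem_span_set'.mp (hspan ▸ Submodule.mem_top : (1 : A) ∈ Ideal.span s)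
  choose x y hxy using fun i => (g i).2
  refine ⟨n, x, fun i => f i • y i, ?_⟩
  simp_rw [CStarModule.inner_op_smul_right, hxy, ← hsum, smul_eq_mul]

variable [StarOrderedRing A]

theorem continuous_of_continuous_smul {ι : Type*} [Fintype ι] {x y : ι → E}
    (hxy : ∑ i, ⟪x i, y i⟫_A = 1) {Z : Type*} [TopologicalSpace Z] {f : Z → A}
    (hf : ∀ i, Continuous fun z => f z • y i) : Continuous f := by
  rw [show f = fun z => ∑ i, ⟪x i, f z • y i⟫_A from
    funext fun z => (sum_inner_smul_eq_self hxy (f z)).symm]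
  exact continuous_finsetSum _ fun i _ => (CStarModule.innerSL (x i)).continuous.comp (hf i)

theorem LinearMap.continuous_of_continuous_inner [CompleteSpace E] (T : E →ₗ[ℂ] E)
    (hT : ∀ w, Continuous fun z => ⟪w, T z⟫_A) : Continuous T := by
  refine T.continuous_of_isClosed_graph ?_
  have hgraph : (T.graph : Set (E × E)) = ⋂ w, {p | ⟪w, p.2⟫_A = ⟪w, T p.1⟫_A} := by
    ext p
    simp only [SetLike.mem_coe, LinearMap.mem_graph_iff, Set.mem_iInter, Set.mem_ofPred_eq]
    refine ⟨fun h w => by rw [h], fun h => ?_⟩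
    rw [← sub_eq_zero, ← CStarModule.inner_self (A := A), CStarModule.inner_sub_right, h,
      sub_self]
  rw [hgraph]
  exact isClosed_iInter fun w => isClosed_eq
    ((CStarModule.innerSL w).continuous.comp continuous_snd) ((hT w).comp continuous_fst)

end CStarModule

namespace Derivation

open WeakDual ComplexStarModule

variable {A : Type*} [CommCStarAlgebra A] [PartialOrder A] [StarOrderedRing A]
  (D : Derivation ℂ A A) (χ : characterSpace ℂ A)

theorem character_apply_eq_zero_of_nonneg {p : A} (hp : 0 ≤ p) (hχp : χ p = 0) :
    χ (D p) = 0 := by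
  have hs : CFC.sqrt p * CFC.sqrt p = p := CFC.sqrt_mul_sqrt_self p hp
  have hχs : χ (CFC.sqrt p) = 0 := by
    rw [← mul_self_eq_zero, ← map_mul, hs, hχp]
  rw [← hs, leibniz, map_add, smul_eq_mul, map_mul, hχs, zero_mul, add_zero]

theorem character_apply_eq_zero_of_isSelfAdjoint {b : A} (hb : IsSelfAdjoint b)
    (hχb : χ b = 0) : χ (D b) = 0 := by
  have hparts : χ b⁺ = χ b⁻ := by
    rw [← sub_eq_zero, ← map_sub, CFC.posPart_sub_negPart b hb, hχb]
  have hpos : χ b⁺ = 0 := by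
    rw [← mul_self_eq_zero]
    nth_rw 2 [hparts]
    rw [← map_mul, CFC.posPart_mul_negPart, map_zero]
  rw [← CFC.posPart_sub_negPart b hb, map_sub, map_sub,
    D.character_apply_eq_zero_of_nonneg χ (CFC.posPart_nonneg b) hpos,
    D.character_apply_eq_zero_of_nonneg χ (CFC.negPart_nonneg b) (hparts ▸ hpos), sub_zero]

theorem character_apply_eq_zero_of_character_eq_zero {a : A} (hχa : χ a = 0) :
    χ (D a) = 0 := by
  have hre : χ (ℜ a : A) = 0 := by
    simp [realPart_apply_coe, ← Complex.coe_smul, map_star, hχa]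
  have him : χ (ℑ a : A) = 0 := by
    simp [imaginaryPart_apply_coe, ← Complex.coe_smul, map_star, hχa]
  rw [← realPart_add_I_smul_imaginaryPart a]
  simp [D.character_apply_eq_zero_of_isSelfAdjoint χ (ℜ a).2 hre,
    D.character_apply_eq_zero_of_isSelfAdjoint χ (ℑ a).2 him]

/-- Characters separate points, and `χ ∘ D` vanishes on `ker χ` because `χ (D (s * s)) = 0` when
`χ s = 0`, while `ker χ` is spanned by its positive elements, which are such squares. -/
theorem eq_zero_of_commCStarAlgebra : D = 0 := by
  ext a
  have hχ (χ : characterSpace ℂ A) : χ (D a) = 0 := by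
    have hshift : χ (a - algebraMap ℂ A (χ a)) = 0 := by
      rw [map_sub, AlgHomClass.commutes, Algebra.algebraMap_self, RingHom.id_apply, sub_self]
    rw [← D.character_apply_eq_zero_of_character_eq_zero χ hshift, map_sub, map_algebraMap,
      sub_zero]
  exact (gelfandTransform_isometry A).injective (by ext χ; simpa using hχ χ)

end Derivation

theorem commute_apply_of_leibniz {B : Type*} [Ring B] {d : B → B}
    (hd : ∀ S T, d (S * T) = d S * T + S * d T) {c : B} (hc : ∀ S, Commute c S) (S : B) :
    Commute (d c) S := by
  have h := congrArg d (hc S).eq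
  rw [hd, hd, (hc (d S)).eq, add_comm (d S * c)] at h
  exact add_right_cancel h

namespace EndA

variable {A M : Type*} [CommCStarAlgebra A] [NormedAddCommGroup M] [NormedSpace ℂ M]
  [Module A M] [IsScalarTower ℂ A M]

theorem apply_smul (S : EndA A M) (a : A) (z : M) :
    (S : M →L[ℂ] M) (a • z) = a • (S : M →L[ℂ] M) z :=
  S.2 a z

section frameTrace

variable [PartialOrder A] [CStarModule A M] {ι : Type*} [Fintype ι]

noncomputable def frameTrace (x y : ι → M) : EndA A M →ₗ[ℂ] A where
  toFun C := ∑ i, ⟪x i, (C : M →L[ℂ] M) (y i)⟫_A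
  map_add' C C' := by simp [Finset.sum_add_distrib]
  map_smul' c C := by simp [Finset.smul_sum]

@[simp]
theorem frameTrace_apply (x y : ι → M) (C : EndA A M) :
    frameTrace x y C = ∑ i, ⟪x i, (C : M →L[ℂ] M) (y i)⟫_A := rfl

end frameTrace

variable [IsBoundedSMul A M]

noncomputable def smulAlgHom : A →ₐ[ℂ] EndA A M where
  toFun a := ⟨ContinuousLinearMap.lsmul ℂ A a, fun b z => smul_comm a b z⟩
  map_one' := by ext z; simp
  map_mul' a b := by ext z; simp [mul_smul]
  map_zero' := by ext z; simp
  map_add' a b := by ext z; simp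
  commutes' c := by ext z; simp [Algebra.algebraMap_eq_smul_one]

@[simp]
theorem smulAlgHom_apply (a : A) (z : M) :
    ((smulAlgHom a : EndA A M) : M →L[ℂ] M) z = a • z :=
  rfl

theorem commute_smulAlgHom (a : A) (S : EndA A M) : Commute (smulAlgHom a) S := by
  ext z
  exact (apply_smul S a z).symm

variable [PartialOrder A] [CStarModule A M] {ι : Type*} [Fintype ι] {x y : ι → M}

theorem frameTrace_smulAlgHom (hxy : ∑ i, ⟪x i, y i⟫_A = 1) (a : A) :
    frameTrace x y (smulAlgHom a : EndA A M) = a :=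
  sum_inner_smul_eq_self hxy a

variable [StarOrderedRing A]

noncomputable def rankOne (y : M) : M →ₗ[ℂ] EndA A M where
  toFun x := ⟨(CStarModule.innerSL (A := A) y).smulRight x,
    fun a z => by simp [CStarModule.innerSL_apply, mul_smul]⟩
  map_add' x x' := by ext z; simp
  map_smul' c x := by ext z; exact smul_comm (⟪y, z⟫_A) c x

@[simp]
theorem rankOne_apply (y x z : M) :
    ((rankOne y x : EndA A M) : M →L[ℂ] M) z = ⟪y, z⟫_A • x :=
  rfl

theorem mul_rankOne (S : EndA A M) (y x : M) :
    S * rankOne y x = rankOne y ((S : M →L[ℂ] M) x) := by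
  ext z
  simpa using apply_smul S _ x

theorem eq_smulAlgHom_frameTrace (hxy : ∑ i, ⟪x i, y i⟫_A = 1) {C : EndA A M}
    (hC : ∀ S, Commute C S) : C = smulAlgHom (frameTrace x y C) := by
  ext z
  have key (i : ι) :
      ⟪x i, y i⟫_A • (C : M →L[ℂ] M) z = ⟪x i, (C : M →L[ℂ] M) (y i)⟫_A • z := by
    have := congrArg (fun S : EndA A M => (S : M →L[ℂ] M) (y i)) (hC (rankOne (x i) z)).eq
    simpa [mul_rankOne] using this
  calc (C : M →L[ℂ] M) z = (∑ i, ⟪x i, y i⟫_A) • (C : M →L[ℂ] M) z := by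
        rw [hxy, one_smul]
    _ = (frameTrace x y C) • z := by
      simp_rw [Finset.sum_smul, key, frameTrace_apply, Finset.sum_smul]

section Derivation

variable {d : EndA A M →ₗ[ℂ] EndA A M}

/-- `d (smulAlgHom a)` is central, hence equal to `smulAlgHom (τ a)`, and `τ` is a derivation of
the commutative C⋆-algebra `A`. -/
theorem map_smulAlgHom_eq_zero (hxy : ∑ i, ⟪x i, y i⟫_A = 1)
    (hd : ∀ S T, d (S * T) = d S * T + S * d T) (a : A) : d (smulAlgHom a) = 0 := by
  set τ : A →ₗ[ℂ] A :=
    frameTrace x y ∘ₗ d ∘ₗ (smulAlgHom : A →ₐ[ℂ] EndA A M).toLinearMap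
  have hτ (a : A) : d (smulAlgHom a) = smulAlgHom (τ a) :=
    eq_smulAlgHom_frameTrace hxy (commute_apply_of_leibniz hd (commute_smulAlgHom a))
  have hinj : Function.Injective (smulAlgHom : A →ₐ[ℂ] EndA A M) :=
    Function.LeftInverse.injective (frameTrace_smulAlgHom hxy)
  let D : Derivation ℂ A A := Derivation.mk' τ fun a b => hinj <| by
    rw [← hτ, map_mul, hd, hτ, hτ, ← map_mul, ← map_mul, ← map_add, smul_eq_mul, smul_eq_mul,
      mul_comm b, add_comm]
  have hD : τ a = 0 := congrArg (· a) D.eq_zero_of_commCStarAlgebra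
  rw [hτ, hD, map_zero]

noncomputable def implementer (d : EndA A M →ₗ[ℂ] EndA A M) (x y : ι → M) : M →ₗ[ℂ] M where
  toFun z := ∑ i, (d (rankOne (x i) z) : M →L[ℂ] M) (y i)
  map_add' z z' := by simp [Finset.sum_add_distrib]
  map_smul' c z := by simp [Finset.smul_sum]

theorem implementer_apply (z : M) :
    implementer d x y z = ∑ i, (d (rankOne (x i) z) : M →L[ℂ] M) (y i) := rfl

theorem apply_eq_implementer_sub (hxy : ∑ i, ⟪x i, y i⟫_A = 1)
    (hd : ∀ S T, d (S * T) = d S * T + S * d T) (S : EndA A M) (z : M) :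
    (d S : M →L[ℂ] M) z =
      implementer d x y ((S : M →L[ℂ] M) z) - (S : M →L[ℂ] M) (implementer d x y z) := by
  rw [eq_sub_iff_add_eq, implementer_apply, implementer_apply]
  simp only [← mul_rankOne, hd, Subalgebra.coe_add, Subalgebra.coe_mul,
    add_apply, mul_apply_eq_comp, rankOne_apply,
    Finset.sum_add_distrib, ← map_sum, ← Finset.sum_smul, hxy, one_smul]

theorem implementer_smul (hxy : ∑ i, ⟪x i, y i⟫_A = 1)
    (hd : ∀ S T, d (S * T) = d S * T + S * d T) (a : A) (z : M) :
    implementer d x y (a • z) = a • implementer d x y z := by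
  have hrank (i : ι) : rankOne (x i) (a • z) = smulAlgHom a * rankOne (x i) z :=
    (mul_rankOne (smulAlgHom a) (x i) z).symm
  simp only [implementer_apply, hrank, hd, map_smulAlgHom_eq_zero hxy hd, zero_mul, zero_add,
    Subalgebra.coe_mul, mul_apply_eq_comp, smulAlgHom_apply, Finset.smul_sum]

theorem continuous_implementer [CompleteSpace M] (hxy : ∑ i, ⟪x i, y i⟫_A = 1)
    (hd : ∀ S T, d (S * T) = d S * T + S * d T) : Continuous (implementer d x y) := by
  refine LinearMap.continuous_of_continuous_inner (A := A) _ fun w =>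
    continuous_of_continuous_smul hxy fun i => ?_
  have h (z : M) : ⟪w, implementer d x y z⟫_A • y i =
      ⟪w, z⟫_A • implementer d x y (y i) - (d (rankOne w (y i)) : M →L[ℂ] M) z := by
    rw [apply_eq_implementer_sub hxy hd, rankOne_apply, rankOne_apply, implementer_smul hxy hd,
      sub_sub_cancel]
  simp_rw [h]
  exact ((CStarModule.innerSL w).continuous.smul continuous_const).sub
    (d _ : M →L[ℂ] M).continuous

end Derivation

theorem exists_eq_mul_sub_mul_of_leibniz [CompleteSpace M]
    (full : (Submodule.span ℂ {a : A | ∃ x y : M, ⟪x, y⟫_A = a}).topologicalClosure = ⊤)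
    (d : EndA A M →ₗ[ℂ] EndA A M) (hd : ∀ S T, d (S * T) = d S * T + S * d T) :
    ∃ T : EndA A M, ∀ S, d S = T * S - S * T := by
  obtain ⟨n, x, y, hxy⟩ := exists_sum_inner_eq_one full
  refine ⟨⟨⟨implementer d x y, continuous_implementer hxy hd⟩, implementer_smul hxy hd⟩,
    fun S => ?_⟩
  ext z
  exact apply_eq_implementer_sub hxy hd S z

end EndA

/-- Mathlib's `CStarModule` takes the inner product `A`-linear in the second variable, so the
arguments of `inn` are swapped. -/
abbrev CStarModule.ofLeftLinear {A M : Type*} [CStarAlgebra A] [PartialOrder A]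
    [NormedAddCommGroup M] [NormedSpace ℂ M] [Module A M] [IsScalarTower ℂ A M] (inn : M → M → A)
    (inn_add_left : ∀ x y z : M, inn (x + y) z = inn x z + inn y z)
    (inn_smul_left : ∀ (a : A) (x y : M), inn (a • x) y = a * inn x y)
    (inn_star : ∀ x y : M, inn x y = star (inn y x))
    (inn_self_nonneg : ∀ x : M, 0 ≤ inn x x)
    (inn_definite : ∀ x : M, inn x x = 0 → x = 0)
    (norm_eq : ∀ x : M, ‖x‖ = Real.sqrt ‖inn x x‖) : CStarModule A M where
  inner x y := inn y x
  inner_add_right := inn_add_left _ _ _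
  inner_self_nonneg := inn_self_nonneg _
  inner_self {x} := ⟨inn_definite x, by rintro rfl; simpa using inn_smul_left 0 0 0⟩
  inner_op_smul_right := inn_smul_left _ _ _
  inner_smul_right_complex {c x y} := by
    rw [← smul_one_smul A c y, inn_smul_left, smul_one_mul]
  star_inner x y := (inn_star x y).symm
  norm_eq_sqrt_norm_inner_self := norm_eq

variable {A : Type*} [CommCStarAlgebra A] [PartialOrder A] [StarOrderedRing A]
variable {M : Type*} [NormedAddCommGroup M] [CompleteSpace M] [NormedSpace ℂ M]
  [Module A M] [IsScalarTower ℂ A M] [IsBoundedSMul A M]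

/-- **Theorem 1.** Every derivation on `End_A(M)` (for `A` commutative unital, `M` full) is
inner: `d S = T * S - S * T` for some fixed `T ∈ End_A(M)`. -/
theorem derivation_on_EndA_is_inner
    (inn : M → M → A)
    (inn_add_left : ∀ x y z : M, inn (x + y) z = inn x z + inn y z)
    (inn_smul_left : ∀ (a : A) (x y : M), inn (a • x) y = a * inn x y)
    (inn_star : ∀ x y : M, inn x y = star (inn y x))
    (inn_self_nonneg : ∀ x : M, 0 ≤ inn x x)
    (inn_definite : ∀ x : M, inn x x = 0 → x = 0)
    (norm_eq : ∀ x : M, ‖x‖ = Real.sqrt ‖inn x x‖)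
    (full : (Submodule.span ℂ {a : A | ∃ x y : M, inn x y = a}).topologicalClosure = ⊤)
    (d : ↥(EndA A M) →ₗ[ℂ] ↥(EndA A M))
    (hd : ∀ S T : ↥(EndA A M), d (S * T) = d S * T + S * d T) :
    ∃ T : ↥(EndA A M), ∀ S : ↥(EndA A M), d S = T * S - S * T := by
  let _ : CStarModule A M := CStarModule.ofLeftLinear inn inn_add_left inn_smul_left inn_star
    inn_self_nonneg inn_definite norm_eq
  have hswap : {a : A | ∃ x y : M, ⟪x, y⟫_A = a} = {a | ∃ x y : M, inn x y = a} := by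
    ext a
    exact exists_comm
  exact EndA.exists_eq_mul_sub_mul_of_leibniz (hswap ▸ full) d hd
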